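/- Let J(z) = L_ε(z) + α_T ‖z‖₂² + α_S S(z) on ℂ^{dL} with ε > 0, α_T, α_S ≥ 0, Hermitian positive semidefinite Q_j and y_j ≥ 0, and set B = ‖Σ_{j=1}^J Q_j‖ + α_T + α_S ‖K‖. Let (z^t)_{t≥0} be generated by z^t = z^{t−1} − μ_t ∇_z J(z^{t−1}) from an arbitrary z^0 ∈ ℂ^{dL}, with step sizes satisfying μ_c ≤ μ_t ≤ μ_c τ^{−N} for some 0 < μ_c ≤ 1/B, τ ∈ (0,1), N ∈ ℕ, where each μ_t either equals μ_c or satisfies the Armijo–Goldstein inequality J(z^{t−1} − μ_t ∇_z J(z^{t−1})) − J(z^{t−1}) ≤ − μ_t ‖∇_z J(z^{t−1})‖₂². Then J(z^t) − J(z^{t−1}) ≤ − μ_t ‖∇_z J(z^{t−1})‖₂² for all t ≥ 1, ‖∇_z J(z^t)‖₂² → 0 as t → ∞, and min_{t ∈ {0,…,T}} ‖∇_z J(z^t)‖₂² ≤ J(z^0)/(μ_c (T+1)) for all T ≥ 0. -/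

import Mathlib

open Matrix
open scoped ComplexOrder

/-- Spectral (operator 2-) norm of a square complex matrix. -/
noncomputable def specNorm {n : Type*} [Fintype n] [DecidableEq n] (A : Matrix n n ℂ) : ℝ :=
  ‖Matrix.toEuclideanCLM (𝕜 := ℂ) A‖

/-- Spectral (operator 2-) norm of a square real matrix. -/
noncomputable def specNormR {n : Type*} [Fintype n] [DecidableEq n] (A : Matrix n n ℝ) : ℝ :=
  ‖Matrix.toEuclideanCLM (𝕜 := ℝ) A‖

/-- The tridiagonal matrix `K ∈ ℝ^{L×L}` of the smoothness penalty, 0-based indexing. -/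
def Kmat (L : ℕ) (κ : ℕ → ℝ) : Matrix (Fin L) (Fin L) ℝ :=
  Matrix.of fun j k =>
    if (j : ℕ) = (k : ℕ) then
      (if (k : ℕ) = 0 then 0 else κ (k : ℕ)) +
      (if (k : ℕ) = L - 1 then 0 else κ ((k : ℕ) + 1))
    else if (j : ℕ) = (k : ℕ) + 1 then -κ ((k : ℕ) + 1)
    else if (k : ℕ) = (j : ℕ) + 1 then -κ ((j : ℕ) + 1)
    else 0

/-- The smoothness penalty `S(z) = Σ_{ℓ=1}^{L−1} κ_ℓ ‖z_{ℓ+1} − z_ℓ‖₂²`. -/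
noncomputable def Spen (d L : ℕ) (κ : ℕ → ℝ) (v : Fin L × Fin d → ℂ) : ℝ :=
  ∑ ℓ : Fin L,
    if h : (ℓ : ℕ) + 1 < L then
      κ ((ℓ : ℕ) + 1) * ∑ i : Fin d, ‖v (⟨(ℓ : ℕ) + 1, h⟩, i) - v (ℓ, i)‖ ^ 2
    else 0

/-- The regularized objective `J(z) = L_ε(z) + α_T ‖z‖₂² + α_S S(z)` on `ℂ^{dL}`. -/
noncomputable def Jobj {d L Jn : ℕ} (Q : Fin Jn → Matrix (Fin L × Fin d) (Fin L × Fin d) ℂ)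
    (y : Fin Jn → ℝ) (ε αT αS : ℝ) (κ : ℕ → ℝ) (v : Fin L × Fin d → ℂ) : ℝ :=
  (∑ j, (Real.sqrt ((star v ⬝ᵥ ((Q j) *ᵥ v)).re + ε) - Real.sqrt (y j + ε)) ^ 2)
    + αT * ∑ p, ‖v p‖ ^ 2 + αS * Spen d L κ v

/-! ### Auxiliary lemmas -/

section Aux

lemma cnorm_sq (c : ℂ) : ‖c‖^2 = c.re^2 + c.im^2 := by
  rw [Complex.sq_norm, Complex.normSq_apply]; ring

/-- Operator norm bound for complex quadratic forms. -/
lemma form_le_c {n : Type*} [Fintype n] [DecidableEq n] (A : Matrix n n ℂ) (v : n → ℂ) :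
    (star v ⬝ᵥ A *ᵥ v).re ≤ specNorm A * ∑ p, ‖v p‖ ^ 2 := by
  set x : EuclideanSpace ℂ n := (WithLp.equiv 2 _).symm v with hx
  have h1 : star v ⬝ᵥ A *ᵥ v = inner ℂ x (Matrix.toEuclideanCLM (𝕜 := ℂ) A x) := by
    rw [EuclideanSpace.inner_eq_star_dotProduct]
    simp [hx, Matrix.toLin'_apply]
    exact dotProduct_comm _ _
  have h2 : ‖x‖ ^ 2 = ∑ p, ‖v p‖ ^ 2 := by
    rw [EuclideanSpace.norm_eq, Real.sq_sqrt]
    · rfl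
    · positivity
  rw [h1]
  calc (inner ℂ x (Matrix.toEuclideanCLM (𝕜 := ℂ) A x) : ℂ).re
      ≤ ‖(inner ℂ x (Matrix.toEuclideanCLM (𝕜 := ℂ) A x) : ℂ)‖ := Complex.re_le_norm _
    _ ≤ ‖x‖ * ‖Matrix.toEuclideanCLM (𝕜 := ℂ) A x‖ := norm_inner_le_norm _ _
    _ ≤ ‖x‖ * (‖Matrix.toEuclideanCLM (𝕜 := ℂ) A‖ * ‖x‖) := by
        gcongr; exact ContinuousLinearMap.le_opNorm _ _
    _ = specNorm A * ∑ p, ‖v p‖ ^ 2 := by rw [← h2, specNorm]; ring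

/-- Operator norm bound for real quadratic forms. -/
lemma form_le_r {n : Type*} [Fintype n] [DecidableEq n] (A : Matrix n n ℝ) (v : n → ℝ) :
    v ⬝ᵥ A *ᵥ v ≤ specNormR A * ∑ p, ‖v p‖ ^ 2 := by
  set x : EuclideanSpace ℝ n := (WithLp.equiv 2 _).symm v with hx
  have h1 : v ⬝ᵥ A *ᵥ v = inner ℝ x (Matrix.toEuclideanCLM (𝕜 := ℝ) A x) := by
    rw [EuclideanSpace.inner_eq_star_dotProduct]
    simp [hx, Matrix.toLin'_apply]
    exact dotProduct_comm _ _
  have h2 : ‖x‖ ^ 2 = ∑ p, ‖v p‖ ^ 2 := by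
    rw [EuclideanSpace.norm_eq, Real.sq_sqrt]
    · rfl
    · positivity
  rw [h1]
  calc (inner ℝ x (Matrix.toEuclideanCLM (𝕜 := ℝ) A x) : ℝ)
      ≤ ‖(inner ℝ x (Matrix.toEuclideanCLM (𝕜 := ℝ) A x) : ℝ)‖ := le_abs_self _
    _ ≤ ‖x‖ * ‖Matrix.toEuclideanCLM (𝕜 := ℝ) A x‖ := norm_inner_le_norm _ _
    _ ≤ ‖x‖ * (‖Matrix.toEuclideanCLM (𝕜 := ℝ) A‖ * ‖x‖) := by
        gcongr; exact ContinuousLinearMap.le_opNorm _ _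
    _ = specNormR A * ∑ p, ‖v p‖ ^ 2 := by rw [← h2, specNormR]; ring

/-- ℕ-level entries of `Kmat`. -/
def Kf (L : ℕ) (κ : ℕ → ℝ) (j k : ℕ) : ℝ :=
  if j = k then
    (if k = 0 then 0 else κ k) + (if k = L - 1 then 0 else κ (k + 1))
  else if j = k + 1 then -κ (k + 1)
  else if k = j + 1 then -κ (j + 1)
  else 0

noncomputable def SqForm (L : ℕ) (κ : ℕ → ℝ) (x : Fin L → ℝ) : ℝ :=
  ∑ ℓ : Fin L, if h : (ℓ:ℕ)+1 < L then κ ((ℓ:ℕ)+1) * (x ⟨(ℓ:ℕ)+1, h⟩ - x ℓ)^2 else 0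

lemma kform (L : ℕ) (κ : ℕ → ℝ) (x : Fin L → ℝ) :
    SqForm L κ x = x ⬝ᵥ (Kmat L κ) *ᵥ x := by
  rw [SqForm]
  set x' : ℕ → ℝ := fun n => if h : n < L then x ⟨n, h⟩ else 0 with hx'
  have hxv : ∀ j : Fin L, x j = x' (j : ℕ) := by
    intro j; simp [hx', j.isLt]
  have hRHS : x ⬝ᵥ (Kmat L κ) *ᵥ x
      = ∑ j ∈ Finset.range L, ∑ k ∈ Finset.range L, x' j * (Kf L κ j k * x' k) := by
    calc x ⬝ᵥ (Kmat L κ) *ᵥ x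
        = ∑ j : Fin L, ∑ k : Fin L, x' (j:ℕ) * (Kf L κ (j:ℕ) (k:ℕ) * x' (k:ℕ)) := by
          simp only [dotProduct, mulVec, Finset.mul_sum]
          refine Finset.sum_congr rfl fun j _ => Finset.sum_congr rfl fun k _ => ?_
          rw [← hxv, ← hxv]; rfl
      _ = ∑ j ∈ Finset.range L, ∑ k ∈ Finset.range L, x' j * (Kf L κ j k * x' k) := by
          rw [Fin.sum_univ_eq_sum_range (fun j => ∑ k : Fin L, x' j * (Kf L κ j (k:ℕ) * x' (k:ℕ)))]
          exact Finset.sum_congr rfl fun j _ =>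
            Fin.sum_univ_eq_sum_range (fun k => x' j * (Kf L κ j k * x' k)) L
  have hLHS : (∑ ℓ : Fin L, if h : (ℓ:ℕ)+1 < L then κ ((ℓ:ℕ)+1) * (x ⟨(ℓ:ℕ)+1, h⟩ - x ℓ)^2 else 0)
      = ∑ ℓ ∈ Finset.range L, (if ℓ+1 < L then κ (ℓ+1) * (x' (ℓ+1) - x' ℓ)^2 else 0) := by
    calc (∑ ℓ : Fin L, if h : (ℓ:ℕ)+1 < L then κ ((ℓ:ℕ)+1) * (x ⟨(ℓ:ℕ)+1, h⟩ - x ℓ)^2 else 0)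
        = ∑ ℓ : Fin L, (fun n => if n+1 < L then κ (n+1) * (x' (n+1) - x' n)^2 else 0) (ℓ:ℕ) := by
          refine Finset.sum_congr rfl fun ℓ _ => ?_
          by_cases h : (ℓ:ℕ)+1 < L
          · show _ = if (ℓ:ℕ) + 1 < L then _ else _
            rw [dif_pos h, if_pos h, hxv ℓ, hxv ⟨(ℓ:ℕ)+1, h⟩]
          · show _ = if (ℓ:ℕ) + 1 < L then _ else _
            simp [h]
      _ = _ := by
          simpa using Fin.sum_univ_eq_sum_range
            (fun n => if n+1 < L then κ (n+1) * (x' (n+1) - x' n)^2 else 0) L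
  rw [hLHS, hRHS]
  clear hLHS hRHS hxv
  rcases L with _ | M
  · simp
  have hsplit : ∀ j k, x' j * (Kf (M+1) κ j k * x' k) =
      (if j = k then (if k = 0 then 0 else κ k * x' k * x' k) else 0)
      + (if j = k then (if k = M then 0 else κ (k+1) * x' k * x' k) else 0)
      + (if j = k + 1 then -(κ (k+1) * x' (k+1) * x' k) else 0)
      + (if k = j + 1 then -(κ (j+1) * x' j * x' (j+1)) else 0) := by
    intro j k
    unfold Kf
    rcases eq_or_ne j k with rfl | hjk
    · simp only [if_pos rfl, Nat.add_sub_cancel, if_neg (show ¬ j = j + 1 by omega)]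
      by_cases h0 : j = 0 <;> by_cases hM : j = M <;> simp [h0, hM] <;> ring
    · by_cases h1 : j = k + 1
      · have h2 : ¬ (k = j + 1) := by omega
        simp only [if_neg hjk, if_pos h1, if_neg h2]
        subst h1; ring
      · by_cases h2 : k = j + 1
        · simp only [if_neg hjk, if_neg h1, if_pos h2]
          subst h2; ring
        · simp only [if_neg hjk, if_neg h1, if_neg h2]; ring
  simp only [hsplit, Finset.sum_add_distrib]
  have c1 : ∀ (f : ℕ → ℝ), (∑ j ∈ Finset.range (M+1), ∑ k ∈ Finset.range (M+1),
      if j = k then f k else 0) = ∑ j ∈ Finset.range (M+1), f j := by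
    intro f
    refine Finset.sum_congr rfl fun j hj => ?_
    rw [Finset.sum_ite_eq (Finset.range (M+1)) j f, if_pos hj]
  have c3 : (∑ j ∈ Finset.range (M+1), ∑ k ∈ Finset.range (M+1),
      if j = k + 1 then -(κ (k+1) * x' (k+1) * x' k) else 0)
      = ∑ k ∈ Finset.range M, -(κ (k+1) * x' (k+1) * x' k) := by
    rw [Finset.sum_comm]
    have : ∀ k ∈ Finset.range (M+1), (∑ j ∈ Finset.range (M+1),
        if j = k + 1 then -(κ (k+1) * x' (k+1) * x' k) else 0)
        = if k + 1 ∈ Finset.range (M+1) then -(κ (k+1) * x' (k+1) * x' k) else 0 := fun k _ =>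
      Finset.sum_ite_eq' (Finset.range (M+1)) (k+1) (fun _ => -(κ (k+1) * x' (k+1) * x' k))
    rw [Finset.sum_congr rfl this, Finset.sum_range_succ]
    simp only [Finset.mem_range]
    rw [if_neg (by omega), add_zero]
    exact Finset.sum_congr rfl fun k hk => if_pos (by simp at hk ⊢; omega)
  have c4 : (∑ j ∈ Finset.range (M+1), ∑ k ∈ Finset.range (M+1),
      if k = j + 1 then -(κ (j+1) * x' j * x' (j+1)) else 0)
      = ∑ j ∈ Finset.range M, -(κ (j+1) * x' j * x' (j+1)) := by
    have : ∀ j ∈ Finset.range (M+1), (∑ k ∈ Finset.range (M+1),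
        if k = j + 1 then -(κ (j+1) * x' j * x' (j+1)) else 0)
        = if j + 1 ∈ Finset.range (M+1) then -(κ (j+1) * x' j * x' (j+1)) else 0 := fun j _ =>
      Finset.sum_ite_eq' (Finset.range (M+1)) (j+1) (fun _ => -(κ (j+1) * x' j * x' (j+1)))
    rw [Finset.sum_congr rfl this, Finset.sum_range_succ]
    simp only [Finset.mem_range]
    rw [if_neg (by omega), add_zero]
    exact Finset.sum_congr rfl fun j hj => if_pos (by simp at hj ⊢; omega)
  rw [c1 (fun k => if k = 0 then 0 else κ k * x' k * x' k),
      c1 (fun k => if k = M then 0 else κ (k+1) * x' k * x' k), c3, c4]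
  have s1 : (∑ j ∈ Finset.range (M+1), if j = 0 then (0:ℝ) else κ j * x' j * x' j)
      = ∑ ℓ ∈ Finset.range M, κ (ℓ+1) * x' (ℓ+1) * x' (ℓ+1) := by
    rw [Finset.sum_range_succ']
    simp
  have s2 : (∑ j ∈ Finset.range (M+1), if j = M then (0:ℝ) else κ (j+1) * x' j * x' j)
      = ∑ j ∈ Finset.range M, κ (j+1) * x' j * x' j := by
    rw [Finset.sum_range_succ, if_pos rfl, add_zero]
    exact Finset.sum_congr rfl fun j hj => if_neg (by simp at hj; omega)
  have sL : (∑ ℓ ∈ Finset.range (M+1), if ℓ+1 < M+1 then κ (ℓ+1) * (x' (ℓ+1) - x' ℓ)^2 else 0)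
      = ∑ ℓ ∈ Finset.range M, κ (ℓ+1) * (x' (ℓ+1) - x' ℓ)^2 := by
    rw [Finset.sum_range_succ, if_neg (by omega), add_zero]
    exact Finset.sum_congr rfl fun ℓ hℓ => if_pos (by simp at hℓ; omega)
  rw [s1, s2, sL, ← Finset.sum_add_distrib, ← Finset.sum_add_distrib, ← Finset.sum_add_distrib]
  exact Finset.sum_congr rfl fun ℓ _ => by ring

lemma spen_nonneg (d L : ℕ) (κ : ℕ → ℝ) (hκ : ∀ ℓ, 1 ≤ ℓ → ℓ ≤ L - 1 → 0 < κ ℓ)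
    (v : Fin L × Fin d → ℂ) : 0 ≤ Spen d L κ v := by
  refine Finset.sum_nonneg fun ℓ _ => ?_
  by_cases h : (ℓ:ℕ)+1 < L
  · rw [dif_pos h]
    have : 0 < κ ((ℓ:ℕ)+1) := hκ _ (by omega) (by omega)
    positivity
  · rw [dif_neg h]

lemma spen_split (d L : ℕ) (κ : ℕ → ℝ) (v : Fin L × Fin d → ℂ) :
    Spen d L κ v = ∑ i : Fin d,
      (SqForm L κ (fun ℓ => (v (ℓ, i)).re) + SqForm L κ (fun ℓ => (v (ℓ, i)).im)) := by
  rw [Spen]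
  have step1 : ∀ ℓ : Fin L,
      (if h : (ℓ:ℕ)+1 < L then
        κ ((ℓ:ℕ)+1) * ∑ i : Fin d, ‖v (⟨(ℓ:ℕ)+1, h⟩, i) - v (ℓ, i)‖ ^ 2 else 0)
      = ∑ i : Fin d, (if h : (ℓ:ℕ)+1 < L then
          κ ((ℓ:ℕ)+1) * ‖v (⟨(ℓ:ℕ)+1, h⟩, i) - v (ℓ, i)‖ ^ 2 else 0) := by
    intro ℓ
    by_cases h : (ℓ:ℕ)+1 < L
    · simp only [dif_pos h, Finset.mul_sum]
    · simp [h]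
  rw [Finset.sum_congr rfl (fun ℓ _ => step1 ℓ), Finset.sum_comm]
  refine Finset.sum_congr rfl fun i _ => ?_
  simp only [SqForm, ← Finset.sum_add_distrib]
  refine Finset.sum_congr rfl fun ℓ _ => ?_
  by_cases h : (ℓ:ℕ)+1 < L
  · simp only [dif_pos h]
    rw [cnorm_sq, Complex.sub_re, Complex.sub_im]; ring
  · simp [h]

lemma spen_le (d L : ℕ) (κ : ℕ → ℝ) (v : Fin L × Fin d → ℂ) :
    Spen d L κ v ≤ specNormR (Kmat L κ) * ∑ p, ‖v p‖ ^ 2 := by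
  rw [spen_split]
  have key : ∀ i : Fin d,
      SqForm L κ (fun ℓ => (v (ℓ, i)).re) + SqForm L κ (fun ℓ => (v (ℓ, i)).im)
      ≤ specNormR (Kmat L κ) * ∑ ℓ : Fin L, ‖v (ℓ, i)‖ ^ 2 := by
    intro i
    rw [kform, kform]
    have h1 := form_le_r (Kmat L κ) (fun ℓ => (v (ℓ, i)).re)
    have h2 := form_le_r (Kmat L κ) (fun ℓ => (v (ℓ, i)).im)
    have h3 : ∀ ℓ : Fin L, ‖v (ℓ, i)‖^2 = ‖(v (ℓ,i)).re‖^2 + ‖(v (ℓ,i)).im‖^2 := by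
      intro ℓ
      rw [Real.norm_eq_abs, Real.norm_eq_abs, sq_abs, sq_abs, cnorm_sq]
    calc _ ≤ specNormR (Kmat L κ) * (∑ ℓ : Fin L, ‖(v (ℓ,i)).re‖^2)
            + specNormR (Kmat L κ) * (∑ ℓ : Fin L, ‖(v (ℓ,i)).im‖^2) := add_le_add h1 h2
      _ = specNormR (Kmat L κ) * ∑ ℓ : Fin L, ‖v (ℓ, i)‖ ^ 2 := by
          simp only [h3, Finset.sum_add_distrib]; ring
  calc _ ≤ ∑ i : Fin d, specNormR (Kmat L κ) * ∑ ℓ : Fin L, ‖v (ℓ, i)‖ ^ 2 :=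
        Finset.sum_le_sum fun i _ => key i
    _ = specNormR (Kmat L κ) * ∑ p : Fin L × Fin d, ‖v p‖ ^ 2 := by
        rw [← Finset.mul_sum, Fintype.sum_prod_type, Finset.sum_comm]

lemma key_scalar (s h r c ε : ℝ) (hε : 0 < ε) (hs : 0 ≤ s) (hr : 0 ≤ r) (hc : 0 ≤ c)
    (hcs : h ^ 2 ≤ 4 * s * r) (hshr : 0 ≤ s + h + r) :
    (Real.sqrt (s + h + r + ε) - c) ^ 2 - (Real.sqrt (s + ε) - c) ^ 2
      - (1 - c / Real.sqrt (s + ε)) * h ≤ r := by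
  set a := Real.sqrt (s + ε) with ha
  set b := Real.sqrt (s + h + r + ε) with hb
  have ha0 : 0 < a := Real.sqrt_pos.2 (by linarith)
  have hb0 : 0 ≤ b := Real.sqrt_nonneg _
  have ha2 : a ^ 2 = s + ε := Real.sq_sqrt (by linarith)
  have hb2 : b ^ 2 = s + h + r + ε := Real.sq_sqrt (by linarith)
  have key : h + 2 * a ^ 2 ≤ 2 * a * b := by
    rcases le_or_gt (h + 2 * a ^ 2) 0 with hneg | hpos
    · nlinarith
    · have hsq : (h + 2 * a ^ 2) ^ 2 ≤ (2 * a * b) ^ 2 := by nlinarith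
      exact (pow_le_pow_iff_left₀ hpos.le (by positivity) (by norm_num)).1 hsq
  have hexp : (b - c) ^ 2 - (a - c) ^ 2 - (1 - c / a) * h
      = r + (c / a) * (h + 2 * a ^ 2 - 2 * a * b) := by
    field_simp
    nlinarith [ha2, hb2]
  rw [hexp]
  have : (c / a) * (h + 2 * a ^ 2 - 2 * a * b) ≤ 0 :=
    mul_nonpos_of_nonneg_of_nonpos (div_nonneg hc ha0.le) (by linarith)
  linarith

lemma sqrt_term_deriv (s h r c ε : ℝ) (hpos : 0 < s + ε) :
    HasDerivAt (fun t : ℝ => (Real.sqrt (s + t*h + t^2*r + ε) - c)^2)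
      ((1 - c / Real.sqrt (s+ε)) * h) 0 := by
  have hsqrt : 0 < Real.sqrt (s + ε) := Real.sqrt_pos.2 hpos
  have hpoly : HasDerivAt (fun t : ℝ => s + t*h + t^2*r + ε) h 0 := by
    have h1 : HasDerivAt (fun t : ℝ => s + t * h) h 0 := by
      simpa using ((hasDerivAt_id (0:ℝ)).mul_const h).const_add s
    have h2 : HasDerivAt (fun t : ℝ => t^2 * r) 0 0 := by
      simpa using (hasDerivAt_pow 2 (0:ℝ)).mul_const r
    simpa using (h1.add h2).add_const ε
  have hs' : HasDerivAt Real.sqrt (1/(2*Real.sqrt (s+ε))) ((fun t : ℝ => s + t*h + t^2*r + ε) 0) := by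
    rw [show (fun t : ℝ => s + t*h + t^2*r + ε) 0 = s+ε by norm_num]
    exact Real.hasDerivAt_sqrt (ne_of_gt hpos)
  have hsq : HasDerivAt (fun t : ℝ => Real.sqrt (s + t*h + t^2*r + ε))
      (1/(2*Real.sqrt (s+ε)) * h) 0 := hs'.comp 0 hpoly
  have hfin := ((hsq.sub_const c).fun_pow 2)
  have hval : Real.sqrt (s + (0:ℝ)*h + (0:ℝ)^2*r + ε) = Real.sqrt (s + ε) := by norm_num
  rw [hval] at hfin
  refine hfin.congr_deriv ?_
  field_simp
  ring

lemma poly_deriv (a b cc : ℝ) : HasDerivAt (fun t : ℝ => a + t*b + t^2*cc) b 0 := by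
  have h1 : HasDerivAt (fun t : ℝ => a + t * b) b 0 := by
    simpa using ((hasDerivAt_id (0:ℝ)).mul_const b).const_add a
  have h2 : HasDerivAt (fun t : ℝ => t^2 * cc) 0 0 := by
    simpa using (hasDerivAt_pow 2 (0:ℝ)).mul_const cc
  simpa using h1.fun_add h2

lemma herm_sym {n : Type*} [Fintype n] (A : Matrix n n ℂ) (hA : A.IsHermitian)
    (z v : n → ℂ) : star v ⬝ᵥ A *ᵥ z = star (star z ⬝ᵥ A *ᵥ v) := by
  rw [star_dotProduct, star_mulVec, ← dotProduct_mulVec, hA.eq]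

lemma qexp {n : Type*} [Fintype n] (A : Matrix n n ℂ) (hA : A.IsHermitian)
    (z v : n → ℂ) (t : ℝ) :
    (star (z + t • v) ⬝ᵥ A *ᵥ (z + t • v)).re
      = (star z ⬝ᵥ A *ᵥ z).re + t * (2 * (star z ⬝ᵥ A *ᵥ v).re)
        + t^2 * (star v ⬝ᵥ A *ᵥ v).re := by
  have hs : t • v = ((t:ℂ)) • v := by funext p; simp [Complex.real_smul]
  rw [hs, mulVec_add, mulVec_smul, star_add, star_smul, add_dotProduct, smul_dotProduct,
    dotProduct_add, dotProduct_smul, dotProduct_add, dotProduct_smul,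
    herm_sym A hA z v]
  simp only [smul_eq_mul, Complex.add_re, Complex.mul_re, Complex.ofReal_re,
    Complex.ofReal_im, RCLike.star_def, Complex.conj_re, Complex.conj_im,
    Complex.mul_im, Complex.sub_re, Complex.sub_im]
  ring

lemma nexp {n : Type*} [Fintype n] (z v : n → ℂ) (t : ℝ) :
    ∑ p, ‖(z + t • v) p‖^2
      = ∑ p, ‖z p‖^2 + t * (∑ p, 2*((starRingEnd ℂ) (z p) * v p).re)
        + t^2 * ∑ p, ‖v p‖^2 := by
  have hpt : ∀ p, ‖(z + t • v) p‖^2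
      = ‖z p‖^2 + t * (2*((starRingEnd ℂ) (z p) * v p).re) + t^2 * ‖v p‖^2 := by
    intro p
    have : (z + t • v) p = z p + (t:ℂ) * v p := by simp [Complex.real_smul]
    rw [this, cnorm_sq, cnorm_sq, cnorm_sq]
    simp only [Complex.add_re, Complex.add_im, Complex.mul_re, Complex.mul_im,
      Complex.ofReal_re, Complex.ofReal_im, RCLike.star_def, Complex.conj_re, Complex.conj_im]
    ring
  rw [Finset.sum_congr rfl (fun p _ => hpt p), Finset.sum_add_distrib, Finset.sum_add_distrib,
    ← Finset.mul_sum, ← Finset.mul_sum, ← Finset.mul_sum]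

noncomputable def SCross (d L : ℕ) (κ : ℕ → ℝ) (z v : Fin L × Fin d → ℂ) : ℝ :=
  ∑ ℓ : Fin L,
    if h : (ℓ : ℕ) + 1 < L then
      κ ((ℓ : ℕ) + 1) * ∑ i : Fin d,
        2*((starRingEnd ℂ) (z (⟨(ℓ:ℕ)+1, h⟩, i) - z (ℓ, i))
            * (v (⟨(ℓ:ℕ)+1, h⟩, i) - v (ℓ, i))).re
    else 0

lemma spenexp (d L : ℕ) (κ : ℕ → ℝ) (z v : Fin L × Fin d → ℂ) (t : ℝ) :
    Spen d L κ (z + t • v)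
      = Spen d L κ z + t * SCross d L κ z v + t^2 * Spen d L κ v := by
  rw [Spen, Spen, Spen, SCross]
  rw [Finset.mul_sum, Finset.mul_sum, ← Finset.sum_add_distrib, ← Finset.sum_add_distrib]
  refine Finset.sum_congr rfl fun ℓ _ => ?_
  by_cases h : (ℓ:ℕ)+1 < L
  · simp only [dif_pos h]
    have hpt : ∀ i : Fin d, ‖(z + t • v) (⟨(ℓ:ℕ)+1, h⟩, i) - (z + t • v) (ℓ, i)‖^2
        = ‖z (⟨(ℓ:ℕ)+1, h⟩, i) - z (ℓ, i)‖^2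
          + t * (2*((starRingEnd ℂ) (z (⟨(ℓ:ℕ)+1, h⟩, i) - z (ℓ, i))
              * (v (⟨(ℓ:ℕ)+1, h⟩, i) - v (ℓ, i))).re)
          + t^2 * ‖v (⟨(ℓ:ℕ)+1, h⟩, i) - v (ℓ, i)‖^2 := by
      intro i
      have : (z + t • v) (⟨(ℓ:ℕ)+1, h⟩, i) - (z + t • v) (ℓ, i)
          = (z (⟨(ℓ:ℕ)+1, h⟩, i) - z (ℓ, i))
            + (t:ℂ) * (v (⟨(ℓ:ℕ)+1, h⟩, i) - v (ℓ, i)) := by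
        simp [Complex.real_smul]; ring
      rw [this, cnorm_sq, cnorm_sq, cnorm_sq]
      simp only [Complex.add_re, Complex.add_im, Complex.mul_re, Complex.mul_im,
        Complex.ofReal_re, Complex.ofReal_im, RCLike.star_def, Complex.conj_re,
        Complex.conj_im, Complex.sub_re, Complex.sub_im]
      ring
    simp only [Finset.mul_sum, ← Finset.sum_add_distrib]
    refine Finset.sum_congr rfl fun i _ => ?_
    rw [hpt i]; ring
  · simp [h]

end Aux

section QuadUpper

variable {d L Jn : ℕ}

lemma quad_upper (Q : Fin Jn → Matrix (Fin L × Fin d) (Fin L × Fin d) ℂ)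
    (hQ : ∀ j, (Q j).PosSemidef)
    (y : Fin Jn → ℝ) (hy : ∀ j, 0 ≤ y j) (ε : ℝ) (hε : 0 < ε)
    (αT αS : ℝ) (hαT : 0 ≤ αT) (hαS : 0 ≤ αS) (κ : ℕ → ℝ)
    (hdiff : Differentiable ℝ (Jobj Q y ε αT αS κ))
    (z v : Fin L × Fin d → ℂ) :
    Jobj Q y ε αT αS κ (z + v) ≤ Jobj Q y ε αT αS κ z
      + fderiv ℝ (Jobj Q y ε αT αS κ) z v
      + (specNorm (∑ j, Q j) + αT + αS * specNormR (Kmat L κ)) * ∑ p, ‖v p‖ ^ 2 := by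
  classical
  set s : Fin Jn → ℝ := fun j => (star z ⬝ᵥ (Q j *ᵥ z)).re with hs_def
  set hh : Fin Jn → ℝ := fun j => 2 * (star z ⬝ᵥ (Q j *ᵥ v)).re with hh_def
  set rr : Fin Jn → ℝ := fun j => (star v ⬝ᵥ (Q j *ᵥ v)).re with hrr_def
  set c : Fin Jn → ℝ := fun j => Real.sqrt (y j + ε) with hc_def
  set P0 : ℝ := ∑ p, ‖z p‖^2 with hP0
  set P1 : ℝ := ∑ p, 2*((starRingEnd ℂ) (z p) * v p).re with hP1
  set P2 : ℝ := ∑ p, ‖v p‖^2 with hP2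
  set S0 : ℝ := Spen d L κ z with hS0
  set S1 : ℝ := SCross d L κ z v with hS1
  set S2 : ℝ := Spen d L κ v with hS2
  -- basic positivity facts
  have hs0 : ∀ j, 0 ≤ s j := fun j => by
    simpa using (hQ j).re_dotProduct_nonneg z
  have hr0 : ∀ j, 0 ≤ rr j := fun j => by
    simpa using (hQ j).re_dotProduct_nonneg v
  have hc0 : ∀ j, 0 ≤ c j := fun j => Real.sqrt_nonneg _
  have hquad : ∀ (j : Fin Jn) (x : ℝ), 0 ≤ rr j * (x * x) + hh j * x + s j := by
    intro j x
    have h1 : 0 ≤ (star (z + x • v) ⬝ᵥ Q j *ᵥ (z + x • v)).re := by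
      simpa using (hQ j).re_dotProduct_nonneg (z + x • v)
    rw [qexp (Q j) (hQ j).1 z v x] at h1
    show 0 ≤ rr j * (x*x) + hh j * x + s j
    simp only [hs_def, hh_def, hrr_def]
    nlinarith [h1]
  have hcs : ∀ j, (hh j)^2 ≤ 4 * s j * rr j := by
    intro j
    have := discrim_le_zero (hquad j)
    rw [discrim] at this
    nlinarith [this]
  have hshr : ∀ j, 0 ≤ s j + hh j + rr j := by
    intro j
    have := hquad j 1
    nlinarith [this]
  -- the curve formula
  have hψ : ∀ t : ℝ, Jobj Q y ε αT αS κ (z + t • v)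
      = (∑ j, (Real.sqrt (s j + t * hh j + t^2 * rr j + ε) - c j)^2)
        + (αT*(P0 + t*P1 + t^2*P2) + αS*(S0 + t*S1 + t^2*S2)) := by
    intro t
    rw [Jobj]
    have h1 : (∑ j, (Real.sqrt ((star (z + t • v) ⬝ᵥ (Q j *ᵥ (z + t • v))).re + ε)
          - Real.sqrt (y j + ε))^2)
        = ∑ j, (Real.sqrt (s j + t * hh j + t^2 * rr j + ε) - c j)^2 := by
      refine Finset.sum_congr rfl fun j _ => ?_
      rw [qexp (Q j) (hQ j).1 z v t]
    rw [h1, nexp z v t, spenexp d L κ z v t]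
    simp only [hP0, hP1, hP2, hS0, hS1, hS2]
    ring
  -- derivative of the curve
  set D : ℝ := (∑ j, (1 - c j / Real.sqrt (s j + ε)) * hh j) + (αT*P1 + αS*S1) with hD_def
  have hderivExplicit : HasDerivAt (fun t : ℝ =>
      (∑ j, (Real.sqrt (s j + t * hh j + t^2 * rr j + ε) - c j)^2)
        + (αT*(P0 + t*P1 + t^2*P2) + αS*(S0 + t*S1 + t^2*S2))) D 0 := by
    rw [hD_def]
    apply HasDerivAt.add
    · exact HasDerivAt.fun_sum fun j _ =>
        sqrt_term_deriv (s j) (hh j) (rr j) (c j) ε (by have := hs0 j; linarith)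
    · exact ((poly_deriv P0 P1 P2).const_mul αT).add ((poly_deriv S0 S1 S2).const_mul αS)
  have hcurve : HasDerivAt (fun t : ℝ => Jobj Q y ε αT αS κ (z + t • v))
      (fderiv ℝ (Jobj Q y ε αT αS κ) z v) 0 := by
    have hline : HasDerivAt (fun t : ℝ => z + t • v) v 0 := by
      simpa using ((hasDerivAt_id (0:ℝ)).smul_const v).const_add z
    have h0 : z + (0:ℝ) • v = z := by simp
    have hF : HasFDerivAt (Jobj Q y ε αT αS κ)
        (fderiv ℝ (Jobj Q y ε αT αS κ) z) ((fun t : ℝ => z + t • v) 0) := by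
      simp only [h0]
      exact (hdiff z).hasFDerivAt
    exact hF.comp_hasDerivAt 0 hline
  have hDeq : fderiv ℝ (Jobj Q y ε αT αS κ) z v = D := by
    refine HasDerivAt.unique ?_ hderivExplicit
    have : (fun t : ℝ => Jobj Q y ε αT αS κ (z + t • v))
        = fun t : ℝ => (∑ j, (Real.sqrt (s j + t * hh j + t^2 * rr j + ε) - c j)^2)
          + (αT*(P0 + t*P1 + t^2*P2) + αS*(S0 + t*S1 + t^2*S2)) := funext hψ
    rw [← this]
    exact hcurve
  -- evaluate at t = 1 and t = 0
  have hone : Jobj Q y ε αT αS κ (z + v)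
      = (∑ j, (Real.sqrt (s j + hh j + rr j + ε) - c j)^2)
        + (αT*(P0 + P1 + P2) + αS*(S0 + S1 + S2)) := by
    have := hψ 1
    rw [one_smul] at this
    rw [this]
    norm_num
  have hzero : Jobj Q y ε αT αS κ z
      = (∑ j, (Real.sqrt (s j + ε) - c j)^2) + (αT*P0 + αS*S0) := by
    have := hψ 0
    rw [zero_smul, add_zero] at this
    rw [this]
    norm_num
  -- per-term bound
  have hterm : (∑ j, (Real.sqrt (s j + hh j + rr j + ε) - c j)^2)
      ≤ (∑ j, ((Real.sqrt (s j + ε) - c j)^2 + (1 - c j / Real.sqrt (s j + ε)) * hh j + rr j)) := by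
    refine Finset.sum_le_sum fun j _ => ?_
    have := key_scalar (s j) (hh j) (rr j) (c j) ε hε (hs0 j) (hr0 j) (hc0 j) (hcs j) (hshr j)
    linarith
  have hsum_r : ∑ j, rr j ≤ specNorm (∑ j, Q j) * P2 := by
    have hmv : (∑ j, Q j) *ᵥ v = ∑ j, (Q j) *ᵥ v := by
      ext p
      simp [mulVec, dotProduct, Matrix.sum_apply, Finset.sum_apply, Finset.sum_mul]
      rw [Finset.sum_comm]
    have hd2 : star v ⬝ᵥ (∑ j, (Q j) *ᵥ v) = ∑ j, star v ⬝ᵥ ((Q j) *ᵥ v) := by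
      simp only [dotProduct, Finset.sum_apply, Finset.mul_sum]
      rw [Finset.sum_comm]
    have h1 : (∑ j, rr j) = (star v ⬝ᵥ ((∑ j, Q j) *ᵥ v)).re := by
      rw [hmv, hd2, Complex.re_sum]
    rw [h1, hP2]
    exact form_le_c _ v
  have hS2le : S2 ≤ specNormR (Kmat L κ) * P2 := spen_le d L κ v
  have hP2nn : 0 ≤ P2 := Finset.sum_nonneg fun p _ => by positivity
  -- put it together
  rw [hone, hzero, hDeq, hD_def]
  have expand : (∑ j, ((Real.sqrt (s j + ε) - c j)^2 + (1 - c j / Real.sqrt (s j + ε)) * hh j + rr j))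
      = (∑ j, (Real.sqrt (s j + ε) - c j)^2)
        + (∑ j, (1 - c j / Real.sqrt (s j + ε)) * hh j) + ∑ j, rr j := by
    rw [Finset.sum_add_distrib, Finset.sum_add_distrib]
  have hαS2 : αS * S2 ≤ αS * (specNormR (Kmat L κ) * P2) :=
    mul_le_mul_of_nonneg_left hS2le hαS
  nlinarith [hterm, expand, hsum_r, hαS2, hP2nn, mul_le_mul_of_nonneg_left hS2le hαS]

end QuadUpper

/-- Gradient descent on the regularized objective
`J(z) = L_ε(z) + α_T‖z‖₂² + α_S S(z)` with Wirtinger gradient `g` and AGA step sizes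
`μ_c ≤ μ_t ≤ μ_c τ^{-N}` (each either equal to `μ_c` or satisfying the
Armijo–Goldstein inequality), where `0 < μ_c ≤ 1/B`,
`B = ‖Σ_j Q_j‖ + α_T + α_S‖K‖`: descent at every step, squared gradient norms tend
to `0`, and `min_{t ≤ T} ‖∇J(z^t)‖₂² ≤ J(z⁰)/(μ_c(T+1))`. -/
theorem stmt9 (d L Jn : ℕ) (Q : Fin Jn → Matrix (Fin L × Fin d) (Fin L × Fin d) ℂ)
    (hQ : ∀ j, (Q j).PosSemidef)
    (y : Fin Jn → ℝ) (hy : ∀ j, 0 ≤ y j) (ε : ℝ) (hε : 0 < ε)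
    (αT αS : ℝ) (hαT : 0 ≤ αT) (hαS : 0 ≤ αS)
    (κ : ℕ → ℝ) (hκ : ∀ ℓ, 1 ≤ ℓ → ℓ ≤ L - 1 → 0 < κ ℓ)
    (g : (Fin L × Fin d → ℂ) → (Fin L × Fin d → ℂ))
    (hdiff : Differentiable ℝ (Jobj Q y ε αT αS κ))
    (hgrad : ∀ v u : Fin L × Fin d → ℂ,
      fderiv ℝ (Jobj Q y ε αT αS κ) v u = 2 * (∑ p, (starRingEnd ℂ) (g v p) * u p).re)
    (μc τ : ℝ) (N : ℕ)
    (hμ0 : 0 < μc)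
    (hμB : μc ≤ 1 / (specNorm (∑ j, Q j) + αT + αS * specNormR (Kmat L κ)))
    (hτ : τ ∈ Set.Ioo (0 : ℝ) 1)
    (z : ℕ → (Fin L × Fin d → ℂ)) (μ : ℕ → ℝ)
    (hμlow : ∀ t : ℕ, μc ≤ μ (t + 1))
    (hμhigh : ∀ t : ℕ, μ (t + 1) ≤ μc / τ ^ N)
    (hAGA : ∀ t : ℕ, μ (t + 1) = μc ∨
      Jobj Q y ε αT αS κ (z t - μ (t + 1) • g (z t)) - Jobj Q y ε αT αS κ (z t)
        ≤ - μ (t + 1) * ∑ p, ‖g (z t) p‖ ^ 2)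
    (hz : ∀ t : ℕ, z (t + 1) = z t - μ (t + 1) • g (z t)) :
    (∀ t : ℕ, Jobj Q y ε αT αS κ (z (t + 1)) - Jobj Q y ε αT αS κ (z t)
        ≤ - μ (t + 1) * ∑ p, ‖g (z t) p‖ ^ 2) ∧
    Filter.Tendsto (fun t : ℕ => ∑ p, ‖g (z t) p‖ ^ 2) Filter.atTop (nhds 0) ∧
    (∀ T : ℕ, ∃ t ≤ T,
      (∑ p, ‖g (z t) p‖ ^ 2) ≤ Jobj Q y ε αT αS κ (z 0) / (μc * (T + 1))) := by
  set F := Jobj Q y ε αT αS κ with hF_def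
  set B : ℝ := specNorm (∑ j, Q j) + αT + αS * specNormR (Kmat L κ) with hB_def
  set G : ℕ → ℝ := fun t => ∑ p, ‖g (z t) p‖ ^ 2 with hG_def
  have hBpos : 0 < B := one_div_pos.mp (lt_of_lt_of_le hμ0 hμB)
  have hμcB : μc * B ≤ 1 := (le_div_iff₀ hBpos).mp hμB
  have hG0 : ∀ t, 0 ≤ G t := fun t => Finset.sum_nonneg fun p _ => by positivity
  -- descent at every step
  have hdesc : ∀ t : ℕ, F (z (t + 1)) - F (z t) ≤ - μ (t + 1) * G t := by
    intro t
    rcases hAGA t with heq | hle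
    · rw [hz t, heq]
      have hval := quad_upper Q hQ y hy ε hε αT αS hαT hαS κ hdiff (z t) (-(μc • g (z t)))
      have hsub : z t + -(μc • g (z t)) = z t - μc • g (z t) := by rw [← sub_eq_add_neg]
      rw [hsub] at hval
      have hgr := hgrad (z t) (-(μc • g (z t)))
      have hp : ∀ p, (starRingEnd ℂ) (g (z t) p) * (-(μc • g (z t))) p
          = ((-(μc * ‖g (z t) p‖^2) : ℝ) : ℂ) := by
        intro p
        have h1 : (-(μc • g (z t))) p = -((μc:ℂ) * g (z t) p) := by
          simp [Complex.real_smul]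
        rw [h1, show (starRingEnd ℂ) (g (z t) p) * -((μc:ℂ) * g (z t) p)
            = -((μc:ℂ) * (g (z t) p * (starRingEnd ℂ) (g (z t) p))) by ring,
          Complex.mul_conj]
        rw [Complex.normSq_eq_norm_sq]
        push_cast
        ring
      have hsum : (∑ p, (starRingEnd ℂ) (g (z t) p) * (-(μc • g (z t))) p)
          = ((-(μc * G t) : ℝ) : ℂ) := by
        rw [Finset.sum_congr rfl (fun p _ => hp p), ← Complex.ofReal_sum]
        congr 1
        rw [hG_def, Finset.mul_sum, ← Finset.sum_neg_distrib]
      rw [hsum] at hgr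
      rw [Complex.ofReal_re] at hgr
      have hnorm : (∑ p, ‖(-(μc • g (z t))) p‖^2) = μc^2 * G t := by
        rw [hG_def, Finset.mul_sum]
        refine Finset.sum_congr rfl fun p _ => ?_
        have h1 : (-(μc • g (z t))) p = -(μc • g (z t) p) := rfl
        rw [h1, norm_neg, norm_smul, Real.norm_eq_abs, mul_pow, sq_abs]
      rw [hgr, hnorm] at hval
      rw [← hF_def, ← hB_def] at hval
      have : F (z t) + 2 * -(μc * G t) + B * (μc^2 * G t) ≤ F (z t) - μc * G t := by
        nlinarith [hG0 t, hμ0, hμcB, mul_nonneg hμ0.le (hG0 t)]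
      linarith [hval, this]
    · rw [hz t]
      exact hle
  -- nonnegativity of F
  have hF0 : ∀ w, 0 ≤ F w := by
    intro w
    rw [hF_def, Jobj]
    have h1 : (0:ℝ) ≤ ∑ j, (Real.sqrt ((star w ⬝ᵥ ((Q j) *ᵥ w)).re + ε)
        - Real.sqrt (y j + ε)) ^ 2 := Finset.sum_nonneg fun j _ => sq_nonneg _
    have h2 : (0:ℝ) ≤ αT * ∑ p, ‖w p‖ ^ 2 :=
      mul_nonneg hαT (Finset.sum_nonneg fun p _ => by positivity)
    have h3 : (0:ℝ) ≤ αS * Spen d L κ w := mul_nonneg hαS (spen_nonneg d L κ hκ w)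
    linarith
  -- telescoping
  have htel : ∀ n : ℕ, (∑ t ∈ Finset.range n, μc * G t) + F (z n) ≤ F (z 0) := by
    intro n
    induction n with
    | zero => simp
    | succ n ih =>
      rw [Finset.sum_range_succ]
      have hd := hdesc n
      have hmu : μc * G n ≤ μ (n+1) * G n := mul_le_mul_of_nonneg_right (hμlow n) (hG0 n)
      linarith
  refine ⟨hdesc, ?_, ?_⟩
  · -- tendsto 0
    have hsummable : Summable (fun t => μc * G t) := by
      apply summable_of_sum_range_le (c := F (z 0))
      · intro t; exact mul_nonneg hμ0.le (hG0 t)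
      · intro n
        have := htel n
        have := hF0 (z n)
        linarith
    have h2 := (hsummable.tendsto_atTop_zero).const_mul μc⁻¹
    simp only [mul_zero] at h2
    have h3 : (fun t => μc⁻¹ * (μc * G t)) = G := by
      funext t
      rw [inv_mul_cancel_left₀ hμ0.ne']
    rw [h3] at h2
    exact h2
  · -- min bound
    intro T
    by_contra hcon
    push_neg at hcon
    have hsumlt : ∑ t ∈ Finset.range (T+1), μc * (F (z 0) / (μc * (T + 1)))
        < ∑ t ∈ Finset.range (T+1), μc * G t := by
      refine Finset.sum_lt_sum_of_nonempty (by simp) fun t ht => ?_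
      have htT : t ≤ T := by simp at ht; omega
      exact mul_lt_mul_of_pos_left (hcon t htT) hμ0
    have hconst : ∑ t ∈ Finset.range (T+1), μc * (F (z 0) / (μc * (T + 1))) = F (z 0) := by
      rw [Finset.sum_const, Finset.card_range, nsmul_eq_mul]
      have hT1 : ((T:ℝ) + 1) ≠ 0 := by positivity
      push_cast
      field_simp
    have := htel (T+1)
    have := hF0 (z (T+1))
    linarith
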